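/- arXiv:1812.06642 — 2 statements merged into one kernel-verified Lean document; each statement's English description precedes it below -/
import Mathlib

section
/- Let $F$ and $G$ be division rings and $M$ a nonzero $F$-$G$-bimodule with $\dim_F M = \dim M_G = 1$. Then the $G$-$F$-bimodules $M^L = \operatorname{Hom}_F(M, F)$ (homomorphisms of left $F$-modules) and $M^R = \operatorname{Hom}_G(M, G)$ (homomorphisms of right $G$-modules) are isomorphic as $G$-$F$-bimodules. -/
/-!
Over division rings, both dimensions being one means that any `m₀ ≠ 0` is a free generator of `M`
on either side. Writing `r • m₀ = m₀ • τ r` then defines a ring isomorphism `τ : F ≃+* G`, and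
each dual is identified with its ring of scalars by evaluation at `m₀`. Composing these gives the
isomorphism `e` with `e φ m₀ = τ (φ m₀)`; since a right-linear form is determined by its value at
`m₀`, compatibility with the bimodule actions is a computation at `m₀`.
-/

open MulOpposite Function LinearMap

section Generator

variable {A M : Type*} [Ring A] [AddCommGroup M] [Module A M] {m₀ : M}

noncomputable def coordEquiv (h : Bijective (toSpanSingleton A M m₀)) : M ≃ₗ[A] A :=
  (LinearEquiv.ofBijective _ h).symm

variable (h : Bijective (toSpanSingleton A M m₀))

@[simp]
theorem coordEquiv_symm_apply (a : A) : (coordEquiv h).symm a = a • m₀ := rfl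

@[simp]
theorem coordEquiv_smul_generator (m : M) : coordEquiv h m • m₀ = m :=
  (coordEquiv h).symm_apply_apply m

@[simp]
theorem coordEquiv_apply_smul_generator (a : A) : coordEquiv h (a • m₀) = a :=
  (coordEquiv h).apply_symm_apply a

theorem apply_eq_coordEquiv_mul (ψ : M →ₗ[A] A) (m : M) : ψ m = coordEquiv h m * ψ m₀ := by
  conv_lhs => rw [← coordEquiv_smul_generator h m]
  rw [map_smul, smul_eq_mul]

noncomputable def evalGeneratorAddEquiv : (M →ₗ[A] A) ≃+ A :=
  ((coordEquiv h).arrowCongrAddEquiv (LinearEquiv.refl A A)).trans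
    (LinearMap.ringLmapEquivSelf A ℕ A).toAddEquiv

@[simp]
theorem evalGeneratorAddEquiv_apply (ψ : M →ₗ[A] A) : evalGeneratorAddEquiv h ψ = ψ m₀ := by
  simp [evalGeneratorAddEquiv]

@[simp]
theorem evalGeneratorAddEquiv_symm_apply_generator (a : A) :
    (evalGeneratorAddEquiv h).symm a m₀ = a := by
  rw [← evalGeneratorAddEquiv_apply h, AddEquiv.apply_symm_apply]

end Generator

section Bimodule

variable {R S M : Type*} [Ring R] [Ring S] [AddCommGroup M] [Module R M] [Module Sᵐᵒᵖ M]
  [SMulCommClass R Sᵐᵒᵖ M] {m₀ : M}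
  (hR : Bijective (toSpanSingleton R M m₀)) (hS : Bijective (toSpanSingleton Sᵐᵒᵖ M m₀))

theorem coordEquiv_smul_generator_mul (a b : R) :
    coordEquiv hS ((a * b) • m₀) = coordEquiv hS (b • m₀) * coordEquiv hS (a • m₀) := by
  conv_lhs => rw [mul_smul, ← coordEquiv_smul_generator hS (b • m₀), smul_comm]
  rw [map_smul, smul_eq_mul]

noncomputable def generatorRingEquiv : R ≃+* S :=
  { ((coordEquiv hR).symm.toAddEquiv.trans (coordEquiv hS).toAddEquiv).trans opAddEquiv.symm with
    map_mul' := fun a b => op_injective (coordEquiv_smul_generator_mul hS a b) }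

theorem op_generatorRingEquiv_smul (r : R) : op (generatorRingEquiv hR hS r) • m₀ = r • m₀ :=
  coordEquiv_smul_generator hS (r • m₀)

theorem op_smul_generator (s : S) : op s • m₀ = (generatorRingEquiv hR hS).symm s • m₀ := by
  rw [← op_generatorRingEquiv_smul hR hS, RingEquiv.apply_symm_apply]

theorem coordEquiv_smul (r : R) (m : M) :
    coordEquiv hS (r • m) = coordEquiv hS m * op (generatorRingEquiv hR hS r) := by
  conv_lhs => rw [← coordEquiv_smul_generator hS m, smul_comm, ← op_generatorRingEquiv_smul hR hS]
  rw [map_smul, smul_eq_mul, coordEquiv_apply_smul_generator]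

noncomputable def leftDualAddEquivRightDual : (M →ₗ[R] R) ≃+ (M →ₗ[Sᵐᵒᵖ] Sᵐᵒᵖ) :=
  (evalGeneratorAddEquiv hR).trans <|
    ((generatorRingEquiv hR hS).toAddEquiv.trans opAddEquiv).trans (evalGeneratorAddEquiv hS).symm

theorem leftDualAddEquivRightDual_apply_generator (φ : M →ₗ[R] R) :
    leftDualAddEquivRightDual hR hS φ m₀ = op (generatorRingEquiv hR hS (φ m₀)) := by
  simp [leftDualAddEquivRightDual]

theorem leftDualAddEquivRightDual_apply (φ : M →ₗ[R] R) (m : M) :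
    leftDualAddEquivRightDual hR hS φ m =
      coordEquiv hS m * op (generatorRingEquiv hR hS (φ m₀)) := by
  rw [apply_eq_coordEquiv_mul hS, leftDualAddEquivRightDual_apply_generator]

theorem leftDualAddEquivRightDual_bimoduleAction (φ φ' : M →ₗ[R] R) (g : S) (c : R)
    (h : ∀ m : M, φ' m = φ (op g • m) * c) (m : M) :
    leftDualAddEquivRightDual hR hS φ' m =
      op (g * unop (leftDualAddEquivRightDual hR hS φ (c • m))) := by
  have hφ' : φ' m₀ = (generatorRingEquiv hR hS).symm g * φ m₀ * c := by
    rw [h, op_smul_generator hR hS, map_smul, smul_eq_mul]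
  rw [leftDualAddEquivRightDual_apply, leftDualAddEquivRightDual_apply, coordEquiv_smul hR hS, hφ']
  simp [mul_assoc]

end Bimodule

theorem bijective_toSpanSingleton_of_rank_eq_one {K V : Type*} [DivisionRing K] [AddCommGroup V]
    [Module K V] (h : Module.rank K V = 1) {v : V} (hv : v ≠ 0) :
    Bijective (toSpanSingleton K V v) := by
  refine ⟨smul_left_injective K hv, range_eq_top.mp ?_⟩
  rw [range_toSpanSingleton, ← finrank_eq_one_iff_of_nonzero v hv]
  exact Module.rank_eq_one_iff_finrank_eq_one.mp h

theorem leftDual_iso_rightDual_of_bimodule_dim_one_general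
    {F G M : Type*} [DivisionRing F] [DivisionRing G]
    [AddCommGroup M] [Module F M] [Module Gᵐᵒᵖ M] [SMulCommClass F Gᵐᵒᵖ M]
    (hF : Module.rank F M = 1)
    (hG : Module.rank Gᵐᵒᵖ M = 1) :
    ∃ e : (M →ₗ[F] F) ≃+ (M →ₗ[Gᵐᵒᵖ] Gᵐᵒᵖ),
      ∀ (φ φ' : M →ₗ[F] F) (g : G) (c : F),
        (∀ m : M, φ' m = φ (op g • m) * c) →
        ∀ m : M, e φ' m = op (g * unop (e φ (c • m))) := by
  obtain ⟨m₀, hm₀⟩ := rank_pos_iff_exists_ne_zero.mp (hF ▸ zero_lt_one : 0 < Module.rank F M)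
  have hR := bijective_toSpanSingleton_of_rank_eq_one hF hm₀
  have hS := bijective_toSpanSingleton_of_rank_eq_one hG hm₀
  exact ⟨leftDualAddEquivRightDual hR hS, leftDualAddEquivRightDual_bimoduleAction hR hS⟩

/-- Let `M` be a nonzero `F`-`G`-bimodule over division rings with both the left
dimension over `F` and the right dimension over `G` equal to one.  Then the left
dual `M^L = Hom_F(M, F)` and the right dual `M^R = Hom_G(M, G)` are isomorphic
as `G`-`F`-bimodules: there is an additive equivalence
`e : (M →ₗ[F] F) ≃+ (M →ₗ[Gᵐᵒᵖ] Gᵐᵒᵖ)` intertwining the `G`-`F`-bimodule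
actions, which are given by `(g • φ • c) m = φ (m g) * c` on `M^L` and by
`(g • ψ • c) m = g * ψ (c • m)` on `M^R`. -/
theorem leftDual_iso_rightDual_of_bimodule_dim_one
    {F G M : Type*} [DivisionRing F] [DivisionRing G]
    [AddCommGroup M] [Module F M] [Module Gᵐᵒᵖ M] [SMulCommClass F Gᵐᵒᵖ M]
    (hM : ∃ m : M, m ≠ 0)
    (hF : Module.rank F M = 1)
    (hG : Module.rank Gᵐᵒᵖ M = 1) :
    ∃ e : (M →ₗ[F] F) ≃+ (M →ₗ[Gᵐᵒᵖ] Gᵐᵒᵖ),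
      ∀ (φ φ' : M →ₗ[F] F) (g : G) (c : F),
        (∀ m : M, φ' m = φ (op g • m) * c) →
        ∀ m : M, e φ' m = op (g * unop (e φ (c • m))) :=
  leftDual_iso_rightDual_of_bimodule_dim_one_general hF hG
end

section
/- For every integer $m \ge 3$, the sequence $(m-2, 1, 2, 2, \ldots, 2, 1)$ of length $m$ (first entry $m-2$, second entry $1$, then $m-3$ entries equal to $2$, last entry $1$) is a dimension sequence. -/
/-- A sequence `a 1, …, a m` is a dimension sequence provided there exist
`x i, y i` (`1 ≤ i ≤ m`) that are nonnegative, with boundary conditions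
`x 0 = -1`, `y 0 = y m = x 1 = 0`, `x m = y 1 = 1`, satisfying
`a i * x i = x (i-1) + x (i+1)` and `a i * y i = y (i-1) + y (i+1)` for `1 ≤ i < m`. -/
def IsDimensionSequence (m : ℕ) (a : ℕ → ℤ) : Prop :=
  ∃ x y : ℕ → ℤ,
    x 0 = -1 ∧ x 1 = 0 ∧ x m = 1 ∧
    y 0 = 0 ∧ y 1 = 1 ∧ y m = 0 ∧
    (∀ i, 1 ≤ i → i ≤ m → 0 ≤ x i ∧ 0 ≤ y i) ∧
    (∀ i, 1 ≤ i → i < m →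
      a i * x i = x (i - 1) + x (i + 1) ∧ a i * y i = y (i - 1) + y (i + 1))

/-!
The solutions are explicit: `x = (-1, 0, 1, 1, …, 1)` and `y = (0, 1, m-2, m-3, …, 1, 0)`.
From index `2` on both are affine in `i`, which is exactly the recurrence
`2 z i = z (i-1) + z (i+1)` demanded by the entries equal to `2`; the equations at
`i = 1` and `i = 2` are checked directly.
-/

namespace Koethe

def x (i : ℕ) : ℤ := if i = 0 then -1 else if i = 1 then 0 else 1

def y (m i : ℕ) : ℤ := if i = 0 then 0 else if i = 1 then 1 else m - i

lemma x_of_two_le {i : ℕ} (hi : 2 ≤ i) : x i = 1 := by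
  simp only [x, if_neg (show i ≠ 0 by omega), if_neg (show i ≠ 1 by omega)]

lemma y_of_two_le (m : ℕ) {i : ℕ} (hi : 2 ≤ i) : y m i = m - i := by
  simp only [y, if_neg (show i ≠ 0 by omega), if_neg (show i ≠ 1 by omega)]

lemma x_nonneg {i : ℕ} (hi : 1 ≤ i) : 0 ≤ x i := by
  unfold x; split_ifs <;> omega

lemma y_nonneg {m i : ℕ} (hi : i ≤ m) : 0 ≤ y m i := by
  unfold y; split_ifs <;> omega

lemma two_mul_x {i : ℕ} (hi : 3 ≤ i) : 2 * x i = x (i - 1) + x (i + 1) := by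
  rw [x_of_two_le (by omega), x_of_two_le (by omega), x_of_two_le (by omega)]
  norm_num

lemma two_mul_y (m : ℕ) {i : ℕ} (hi : 3 ≤ i) : 2 * y m i = y m (i - 1) + y m (i + 1) := by
  rw [y_of_two_le m (by omega), y_of_two_le m (by omega), y_of_two_le m (by omega)]
  push_cast [show 1 ≤ i by omega]
  ring

end Koethe

open Koethe in
/-- For every `m ≥ 3`, the sequence `(m-2, 1, 2, 2, …, 2, 1)` of length `m`
(first entry `m-2`, second entry `1`, then `m-3` entries equal to `2`, and
last entry `1`) is a dimension sequence. -/
theorem isDimensionSequence_koethe (m : ℕ) (hm : 3 ≤ m) :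
    IsDimensionSequence m
      (fun i => if i = 1 then (m : ℤ) - 2 else if i = 2 then 1
        else if i = m then 1 else 2) := by
  refine ⟨x, y m, rfl, rfl, x_of_two_le (by omega), rfl, rfl,
    (y_of_two_le m (by omega)).trans (sub_self _), fun i h1 h2 => ⟨x_nonneg h1, y_nonneg h2⟩,
    fun i h1 h2 => ?_⟩
  obtain rfl | rfl | h3 : i = 1 ∨ i = 2 ∨ 3 ≤ i := by omega
  · simp [x, y]
  · simp [x, y]
    ring
  · simp only [if_neg (show i ≠ 1 by omega), if_neg (show i ≠ 2 by omega),
      if_neg (show i ≠ m by omega)]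
    exact ⟨two_mul_x h3, two_mul_y m h3⟩
end
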